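/- Let X be a locally compact, σ-compact topological space, K ⊆ X a compact subset, and f, f' : [0,∞) → X proper continuous maps whose images are disjoint from K. If f and f' are properly homotopic in X, then they are properly homotopic via a homotopy whose image is disjoint from K, i.e. they are properly homotopic as maps into X \ K. -/

import Mathlib

open scoped NNReal

/-- A map is proper if it is continuous and preimages of compact sets are compact. -/
def ProperMap {A B : Type*} [TopologicalSpace A] [TopologicalSpace B] (f : A → B) : Prop :=
  Continuous f ∧ ∀ K : Set B, IsCompact K → IsCompact (f ⁻¹' K)

/-- Two maps are properly homotopic if there is a homotopy between them which is proper. -/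
def ProperlyHomotopic {A B : Type*} [TopologicalSpace A] [TopologicalSpace B]
    (f g : A → B) : Prop :=
  ∃ H : A × unitInterval → B, ProperMap H ∧ (∀ a, H (a, 0) = f a) ∧ (∀ a, H (a, 1) = g a)

/-!
`H⁻¹ K` is a compact subset of `[0,∞) × I` missing `[0,∞) × {0,1}`, so an Urysohn function `c`
on `I`, vanishing at `0` and `1` and large on the `I`-projection of `H⁻¹ K`, lies above it.
Precomposing `H` with the proper map `(s, t) ↦ (max s (c t), t)` keeps the ends `f`, `f'` and
pushes every point of the homotopy past `H⁻¹ K`.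
-/

theorem ProperMap.comp {A B C : Type*} [TopologicalSpace A] [TopologicalSpace B]
    [TopologicalSpace C] {g : B → C} {f : A → B} (hg : ProperMap g) (hf : ProperMap f) :
    ProperMap (g ∘ f) :=
  ⟨hg.1.comp hf.1, fun K hK => hf.2 _ (hg.2 K hK)⟩

section Ray

variable {Y : Type*}

def retractRay (c : Y → ℝ≥0) (p : ℝ≥0 × Y) : ℝ≥0 × Y :=
  (max p.1 (c p.2), p.2)

theorem retractRay_of_eq_zero {c : Y → ℝ≥0} {y : Y} (hy : c y = 0) (s : ℝ≥0) :
    retractRay c (s, y) = (s, y) := by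
  simp [retractRay, hy]

variable [TopologicalSpace Y]

theorem properMap_of_fst_le [CompactSpace Y] [T2Space Y] {φ : ℝ≥0 × Y → ℝ≥0 × Y}
    (hφ : Continuous φ) (hle : ∀ p, p.1 ≤ (φ p).1) : ProperMap φ := by
  refine ⟨hφ, fun C hC => ?_⟩
  obtain ⟨N, hN⟩ := (hC.image continuous_fst).bddAbove
  refine (isCompact_Icc (a := 0) (b := N)).prod isCompact_univ
    |>.of_isClosed_subset (hC.isClosed.preimage hφ) fun p hp => ?_
  exact ⟨⟨zero_le, (hle p).trans (hN ⟨φ p, hp, rfl⟩)⟩, trivial⟩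

theorem properMap_retractRay [CompactSpace Y] [T2Space Y] {c : Y → ℝ≥0} (hc : Continuous c) :
    ProperMap (retractRay c) :=
  properMap_of_fst_le ((continuous_fst.max (hc.comp continuous_snd)).prodMk continuous_snd)
    fun _ => le_max_left _ _

theorem exists_continuous_eqOn_zero_fst_lt [T2Space Y] [NormalSpace Y] {Z : Set (ℝ≥0 × Y)}
    (hZ : IsCompact Z) {A : Set Y} (hA : IsClosed A) (hAZ : Disjoint A (Prod.snd '' Z)) :
    ∃ c : Y → ℝ≥0, Continuous c ∧ Set.EqOn c 0 A ∧ ∀ p ∈ Z, p.1 < c p.2 := by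
  obtain ⟨M, hM⟩ := (hZ.image continuous_fst).bddAbove
  obtain ⟨u, hu0, hu1, -⟩ :=
    exists_continuous_zero_one_of_isClosed hA (hZ.image continuous_snd).isClosed hAZ
  refine ⟨fun y => (M + 1) * (u y).toNNReal,
    continuous_const.mul (continuous_real_toNNReal.comp u.continuous), fun y hy => ?_,
    fun p hp => ?_⟩
  · simp [hu0 hy]
  · have hup : u p.2 = 1 := hu1 ⟨p, hp, rfl⟩
    calc p.1 ≤ M := hM ⟨p, hp, rfl⟩
      _ < (M + 1) * (u p.2).toNNReal := by simp [hup]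

end Ray

theorem stmt2_general {X : Type*} [TopologicalSpace X]
    (K : Set X) (hK : IsCompact K)
    (f f' : ℝ≥0 → X)
    (hfK : ∀ s, f s ∉ K) (hf'K : ∀ s, f' s ∉ K)
    (h : ProperlyHomotopic f f') :
    ∃ H : ℝ≥0 × unitInterval → X, ProperMap H ∧ (∀ s, H (s, 0) = f s) ∧
      (∀ s, H (s, 1) = f' s) ∧ ∀ p, H p ∉ K := by
  obtain ⟨H, hH, hH0, hH1⟩ := h
  have hends : Disjoint ({0, 1} : Set unitInterval) (Prod.snd '' (H ⁻¹' K)) := by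
    rintro T hT0 hTZ t htT
    obtain ⟨⟨s, t⟩, hsK, rfl⟩ := hTZ htT
    rcases hT0 htT with rfl | rfl
    · exact hfK s (hH0 s ▸ hsK)
    · exact hf'K s (hH1 s ▸ hsK)
  obtain ⟨c, hc, hc01, hcZ⟩ :=
    exists_continuous_eqOn_zero_fst_lt (hH.2 K hK) (Set.toFinite _).isClosed hends
  refine ⟨H ∘ retractRay c, hH.comp (properMap_retractRay hc), fun s => ?_, fun s => ?_,
    fun p hp => ?_⟩
  · simp [retractRay_of_eq_zero (hc01 (Set.mem_insert _ _)), hH0]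
  · simp [retractRay_of_eq_zero (hc01 (Set.mem_insert_of_mem _ rfl)), hH1]
  · exact (hcZ _ hp).not_ge (le_max_right _ _)

/-- If two proper rays in a locally compact σ-compact space have images disjoint from a
compact set `K` and are properly homotopic, then they are properly homotopic via a
homotopy whose image is disjoint from `K`. -/
theorem stmt2 {X : Type*} [TopologicalSpace X] [LocallyCompactSpace X] [SigmaCompactSpace X]
    (K : Set X) (hK : IsCompact K)
    (f f' : ℝ≥0 → X) (hf : ProperMap f) (hf' : ProperMap f')
    (hfK : ∀ s, f s ∉ K) (hf'K : ∀ s, f' s ∉ K)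
    (h : ProperlyHomotopic f f') :
    ∃ H : ℝ≥0 × unitInterval → X, ProperMap H ∧ (∀ s, H (s, 0) = f s) ∧
      (∀ s, H (s, 1) = f' s) ∧ ∀ p, H p ∉ K :=
  stmt2_general K hK f f' hfK hf'K h
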